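/- Reduced state of the permutation-averaged encoded state (SU(d), single-erasure case, Appendix D): let d ≥ 1 and m : ℕ. Let ψ : Fin d → ℂ with ∑ x, ‖ψ x‖² = 1, and let ρ : Matrix (Fin m → Fin d) (Fin m → Fin d) ℂ be positive semidefinite with trace 1 and ρ * tp m ↑W = tp m ↑W * ρ for every W ∈ Matrix.unitaryGroup (Fin d) ℂ. Define T : Matrix (Fin (m+1) → Fin d) (Fin (m+1) → Fin d) ℂ by T f g = ψ (f 0) * star (ψ (g 0)) * ρ (fun i => f i.succ) (fun i => g i.succ), and S := (((m+1))! : ℂ)⁻¹ • ∑ π : Equiv.Perm (Fin (m+1)), O π * T * (O π)ᴴ. Then for all x y : Fin d, ∑ h : Fin m → Fin d, S (Fin.cons x h) (Fin.cons y h) = (1/(m+1) : ℂ) * ψ x * star (ψ y) + ((m : ℂ)/(m+1)) * (1/d) * (if x = y then 1 else 0). -/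

import Mathlib

open Matrix
open scoped ComplexOrder

/-- The `m`-fold tensor power of a `d × d` matrix, acting on `m` qudits. -/
def tp {d : ℕ} (m : ℕ) (W : Matrix (Fin d) (Fin d) ℂ) :
    Matrix (Fin m → Fin d) (Fin m → Fin d) ℂ :=
  Matrix.of fun f g => ∏ i, W (f i) (g i)

/-- The permutation operator on `n` qudits associated to `π : S_n`. -/
def permOp {d n : ℕ} (π : Equiv.Perm (Fin n)) :
    Matrix (Fin n → Fin d) (Fin n → Fin d) ℂ :=
  Matrix.of fun f g => if g = f ∘ π then 1 else 0

/-!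
Relabelling the sites by `π` moves the kept site `0` to `π⁻¹ 0`, so the reduced state at site `0`
of the `S_{m+1}`-average of `T = |ψ⟩⟨ψ| ⊗ ρ` is the average over all sites of the one-site reduced
states of `T`. At site `0` this is `|ψ⟩⟨ψ|`; at any other site it is a one-site reduced state of
`ρ`, which is `I/d`: the diagonal sign unitaries kill its off-diagonal entries, the permutation
matrices make its diagonal constant, and its trace is `1`.
-/

section ReducedState

variable {ι α R : Type*} [Fintype ι] [DecidableEq ι] [Fintype α] [DecidableEq α] [Semiring R]

/-- The partial trace over every site but `s`: the `f` with `f s = x` run over the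
configurations of the traced-out sites. -/
def reducedAt (s : ι) : Matrix (ι → α) (ι → α) R →ₗ[R] Matrix α α R where
  toFun A := of fun x y => ∑ f : ι → α, if f s = x then A f (Function.update f s y) else 0
  map_add' A B := by
    ext x y
    simp only [Matrix.add_apply, of_apply, ← Finset.sum_add_distrib, ite_add_zero]
  map_smul' c A := by
    ext x y
    simp only [Matrix.smul_apply, of_apply, smul_eq_mul, Finset.mul_sum, mul_ite, mul_zero,
      RingHom.id_apply]

theorem reducedAt_apply (s : ι) (A : Matrix (ι → α) (ι → α) R) (x y : α) :
    reducedAt s A x y = ∑ f : ι → α, if f s = x then A f (Function.update f s y) else 0 :=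
  rfl

theorem trace_reducedAt (s : ι) (A : Matrix (ι → α) (ι → α) R) :
    trace (reducedAt s A) = trace A := by
  simp only [trace, diag, reducedAt_apply]
  rw [Finset.sum_comm]
  simp

theorem reducedAt_submatrix_comp (π : Equiv.Perm ι) (s : ι) (A : Matrix (ι → α) (ι → α) R) :
    reducedAt s (A.submatrix (· ∘ π) (· ∘ π)) = reducedAt (π.symm s) A := by
  ext x y
  refine Fintype.sum_equiv (π.symm.arrowCongr (Equiv.refl α)) _ _ fun f => ?_
  simp [Function.update_comp_equiv]
  rfl

theorem reducedAt_submatrix_perm_comp_apply (τ : Equiv.Perm α) (s : ι)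
    (A : Matrix (ι → α) (ι → α) R) (x y : α) :
    reducedAt s (A.submatrix (τ ∘ ·) (τ ∘ ·)) x y = reducedAt s A (τ x) (τ y) := by
  refine Fintype.sum_equiv ((Equiv.refl ι).arrowCongr τ) _ _ fun f => ?_
  simp [Function.comp_update]
  rfl

end ReducedState

theorem sum_perm_apply_zero {M : Type*} [AddCommMonoid M] {n : ℕ} (F : Fin (n + 1) → M) :
    ∑ π : Equiv.Perm (Fin (n + 1)), F (π 0) = n.factorial • ∑ s, F s := by
  rw [← Equiv.Perm.decomposeFin.symm.sum_comp, Fintype.sum_prod_type]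
  simp [Equiv.Perm.decomposeFin_symm_apply_zero, Finset.smul_sum, Fintype.card_perm]

section FinSites

variable {α R : Type*} [Fintype α] [DecidableEq α] {n : ℕ}

section Semiring

variable [Semiring R]

theorem reducedAt_zero_apply (A : Matrix (Fin (n + 1) → α) (Fin (n + 1) → α) R) (x y : α) :
    reducedAt 0 A x y = ∑ h : Fin n → α, A (Fin.cons x h) (Fin.cons y h) := by
  rw [reducedAt_apply, ← (Fin.consEquiv fun _ => α).sum_comp, Fintype.sum_prod_type]
  simp [Fin.consEquiv, Fin.update_cons_zero]

theorem reducedAt_zero_sum_submatrix_comp (A : Matrix (Fin (n + 1) → α) (Fin (n + 1) → α) R) :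
    reducedAt 0 (∑ π : Equiv.Perm (Fin (n + 1)), A.submatrix (· ∘ π) (· ∘ π)) =
      n.factorial • ∑ s, reducedAt s A := by
  simp only [map_sum, reducedAt_submatrix_comp]
  rw [← sum_perm_apply_zero]
  exact Fintype.sum_equiv (Equiv.inv _) _ _ fun π => rfl

end Semiring

variable [CommSemiring R]

def consKronecker (A : Matrix α α R) (B : Matrix (Fin n → α) (Fin n → α) R) :
    Matrix (Fin (n + 1) → α) (Fin (n + 1) → α) R :=
  of fun f g => A (f 0) (g 0) * B (Fin.tail f) (Fin.tail g)

theorem reducedAt_zero_consKronecker (A : Matrix α α R) (B : Matrix (Fin n → α) (Fin n → α) R) :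
    reducedAt 0 (consKronecker A B) = trace B • A := by
  ext x y
  simp [reducedAt_zero_apply, consKronecker, trace, Finset.mul_sum, mul_comm]

theorem reducedAt_succ_consKronecker (A : Matrix α α R) (B : Matrix (Fin n → α) (Fin n → α) R)
    (j : Fin n) : reducedAt j.succ (consKronecker A B) = trace A • reducedAt j B := by
  ext x y
  rw [reducedAt_apply, ← (Fin.consEquiv fun _ => α).sum_comp, Fintype.sum_prod_type]
  simp only [Fin.consEquiv, consKronecker, Equiv.coe_fn_mk, of_apply, Fin.cons_zero,
    Fin.cons_succ, Fin.tail_cons, Fin.tail_update_succ,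
    Function.update_of_ne (Fin.succ_ne_zero j).symm, ← mul_ite_zero, ← Finset.mul_sum]
  simp [reducedAt_apply, trace, Finset.sum_mul]

end FinSites

theorem permOp_mul_mul_conjTranspose {d n : ℕ} (π : Equiv.Perm (Fin n))
    (T : Matrix (Fin n → Fin d) (Fin n → Fin d) ℂ) :
    permOp π * T * (permOp π)ᴴ = T.submatrix (· ∘ π) (· ∘ π) := by
  ext f g
  simp [permOp, mul_apply]

section Unitary

variable {n R : Type*} [Fintype n] [DecidableEq n] [CommRing R] [StarRing R]

theorem diagonal_mem_unitaryGroup {ε : n → R} (hε : ∀ a, ε a * star (ε a) = 1) :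
    diagonal ε ∈ unitaryGroup n R := by
  rw [mem_unitaryGroup_iff, star_eq_conjTranspose, diagonal_conjTranspose, diagonal_mul_diagonal]
  simp [hε]

theorem permMatrix_mem_unitaryGroup (σ : Equiv.Perm n) : σ.permMatrix R ∈ unitaryGroup n R := by
  rw [mem_unitaryGroup_iff, star_eq_conjTranspose, conjTranspose_permMatrix, ← permMatrix_mul,
    inv_mul_cancel, permMatrix_one]

end Unitary

theorem apply_eq_zero_of_mul_diagonal_eq {n R : Type*} [Fintype n] [DecidableEq n] [CommRing R]
    [NoZeroDivisors R] {M : Matrix n n R} {e : n → R} (h : M * diagonal e = diagonal e * M)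
    {i j : n} (hij : e i ≠ e j) : M i j = 0 := by
  have hij' : M i j * e j = e i * M i j := by
    simpa only [mul_diagonal, diagonal_mul] using congrFun (congrFun h i) j
  have : (e i - e j) * M i j = 0 := by linear_combination -hij'
  exact (mul_eq_zero.mp this).resolve_left (sub_ne_zero.mpr hij)

theorem submatrix_eq_self_of_mul_permMatrix_eq {n R : Type*} [Fintype n] [DecidableEq n]
    [Semiring R] {M : Matrix n n R} {σ : Equiv.Perm n}
    (h : M * σ.permMatrix R = σ.permMatrix R * M) : M.submatrix σ σ = M := by
  rw [PEquiv.mul_toMatrix_toPEquiv, PEquiv.toMatrix_toPEquiv_mul] at h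
  ext i j
  simpa using (congrFun (congrFun h i) (σ j)).symm

theorem tp_diagonal {d : ℕ} (m : ℕ) (ε : Fin d → ℂ) :
    tp m (diagonal ε) = diagonal fun f => ∏ i, ε (f i) := by
  ext f g
  simp [tp, diagonal_apply, Finset.prod_ite_zero, funext_iff]

theorem tp_permMatrix {d : ℕ} (m : ℕ) (τ : Equiv.Perm (Fin d)) :
    tp m (τ.permMatrix ℂ) = Equiv.Perm.permMatrix ℂ ((Equiv.refl (Fin m)).arrowCongr τ) := by
  ext f g
  simp [tp, PEquiv.toMatrix_apply, Finset.prod_boole, funext_iff, Equiv.arrowCongr_apply]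

section CollectiveInvariance

variable {d m : ℕ} {ρ : Matrix (Fin m → Fin d) (Fin m → Fin d) ℂ}
  (hρ : ∀ W ∈ unitaryGroup (Fin d) ℂ, ρ * tp m W = tp m W * ρ)
include hρ

theorem reducedAt_apply_eq_zero_of_commute_tp (s : Fin m) {x y : Fin d} (hxy : x ≠ y) :
    reducedAt s ρ x y = 0 := by
  set ε : Fin d → ℂ := fun a => if a = x then -1 else 1
  have hcomm : ρ * diagonal (fun f => ∏ i, ε (f i)) = diagonal (fun f => ∏ i, ε (f i)) * ρ := by
    rw [← tp_diagonal]
    exact hρ _ (diagonal_mem_unitaryGroup fun a => by by_cases a = x <;> simp [ε, *])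
  refine Finset.sum_eq_zero fun f _ => ite_eq_right_iff.mpr fun hfx => ?_
  refine apply_eq_zero_of_mul_diagonal_eq hcomm ?_
  -- the sign products of `f` and `update f s y` differ by the factor `ε x / ε y = -1`
  have hupd :
      ∀ v, ∏ i, ε (Function.update f s v i) = ε v * ∏ i ∈ Finset.univ \ {s}, ε (f i) := by
    intro v
    simp_rw [← Function.comp_apply (f := ε), Function.comp_update]
    exact Finset.prod_update_of_mem (Finset.mem_univ s) _ _
  have hQ : ∏ i ∈ Finset.univ \ {s}, ε (f i) ≠ 0 :=
    Finset.prod_ne_zero_iff.mpr fun i _ => by by_cases f i = x <;> simp [ε, *]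
  have hf : ∏ i, ε (f i) = ε x * ∏ i ∈ Finset.univ \ {s}, ε (f i) := by
    rw [← hfx, ← hupd, Function.update_eq_self]
  rw [hf, hupd]
  simpa [ε, Ne.symm hxy, neg_eq_iff_add_eq_zero, ← two_mul] using hQ

theorem reducedAt_apply_self_eq_of_commute_tp (s : Fin m) (x y : Fin d) :
    reducedAt s ρ x x = reducedAt s ρ y y := by
  have hcomm := hρ _ (permMatrix_mem_unitaryGroup (Equiv.swap x y))
  rw [tp_permMatrix] at hcomm
  have hinv : ρ.submatrix (Equiv.swap x y ∘ ·) (Equiv.swap x y ∘ ·) = ρ :=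
    submatrix_eq_self_of_mul_permMatrix_eq hcomm
  conv_lhs => rw [← hinv, reducedAt_submatrix_perm_comp_apply, Equiv.swap_apply_left]

theorem reducedAt_eq_of_commute_tp (s : Fin m) : reducedAt s ρ = (trace ρ / d) • 1 := by
  ext x y
  have hd : (d : ℂ) ≠ 0 := Nat.cast_ne_zero.mpr (Fin.pos x).ne'
  rcases eq_or_ne x y with rfl | hxy
  · have htr : trace ρ = d * reducedAt s ρ x x := by
      rw [← trace_reducedAt s ρ, trace]
      simp [reducedAt_apply_self_eq_of_commute_tp hρ s _ x]
    simp [htr, hd]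
  · simp [reducedAt_apply_eq_zero_of_commute_tp hρ s hxy, hxy]

end CollectiveInvariance

theorem perm_avg_reduced_state_general (d m : ℕ)
    (ψ : Fin d → ℂ) (hψ : ∑ x, ‖ψ x‖ ^ 2 = (1 : ℝ))
    (ρ : Matrix (Fin m → Fin d) (Fin m → Fin d) ℂ)
    (hρtr : ρ.trace = 1)
    (hρcomm : ∀ W ∈ Matrix.unitaryGroup (Fin d) ℂ, ρ * tp m W = tp m W * ρ)
    (T : Matrix (Fin (m + 1) → Fin d) (Fin (m + 1) → Fin d) ℂ)
    (hT : ∀ f g, T f g = ψ (f 0) * star (ψ (g 0)) *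
      ρ (fun i => f i.succ) (fun i => g i.succ))
    (S : Matrix (Fin (m + 1) → Fin d) (Fin (m + 1) → Fin d) ℂ)
    (hS : S = (((m + 1).factorial : ℂ))⁻¹ •
      ∑ π : Equiv.Perm (Fin (m + 1)), permOp π * T * (permOp π)ᴴ)
    (x y : Fin d) :
    ∑ h : Fin m → Fin d, S (Fin.cons x h) (Fin.cons y h) =
      (1 / ((m : ℂ) + 1)) * ψ x * star (ψ y) +
        ((m : ℂ) / ((m : ℂ) + 1)) * (1 / (d : ℂ)) * (if x = y then 1 else 0) := by
  have hT' : T = consKronecker (vecMulVec ψ (star ψ)) ρ := Matrix.ext hT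
  have hψ' : trace (vecMulVec ψ (star ψ)) = 1 := by
    simp [trace_vecMulVec, dotProduct, Complex.mul_conj', ← Complex.ofReal_pow,
      ← Complex.ofReal_sum, hψ]
  have hsites : ∑ s, reducedAt s T = vecMulVec ψ (star ψ) + ((m : ℂ) / d) • 1 := by
    simp only [Fin.sum_univ_succ, hT', reducedAt_zero_consKronecker, reducedAt_succ_consKronecker,
      reducedAt_eq_of_commute_tp hρcomm, hρtr, hψ', one_smul, Finset.sum_const, Finset.card_univ,
      Fintype.card_fin, ← Nat.cast_smul_eq_nsmul ℂ, smul_smul, mul_one_div]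
  rw [← reducedAt_zero_apply, hS]
  simp only [permOp_mul_mul_conjTranspose, map_smul, reducedAt_zero_sum_submatrix_comp, hsites]
  rw [← Nat.cast_smul_eq_nsmul ℂ, smul_smul, Nat.factorial_succ, Nat.cast_mul,
    mul_inv, mul_assoc, inv_mul_cancel₀ (by positivity), mul_one]
  simp only [Matrix.smul_apply, Matrix.add_apply, vecMulVec_apply, Pi.star_apply, one_apply,
    smul_eq_mul]
  split_ifs <;> push_cast <;> ring

/-- **Reduced state of the permutation-averaged encoded state** (SU(d), single-erasure case,
Appendix D): if `ρ` is a state on `m` qudits commuting with every collective unitary `W^{⊗m}` and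
`ψ` is a normalized single-qudit state, then the single-site marginal (at site `0`) of the
`S_{m+1}`-average of `|ψ⟩⟨ψ| ⊗ ρ` equals `(1/n)|ψ⟩⟨ψ| + ((n−1)/n)·I/d` with `n = m + 1`. -/
theorem perm_avg_reduced_state (d m : ℕ) (hd : 1 ≤ d)
    (ψ : Fin d → ℂ) (hψ : ∑ x, ‖ψ x‖ ^ 2 = (1 : ℝ))
    (ρ : Matrix (Fin m → Fin d) (Fin m → Fin d) ℂ)
    (hρ : ρ.PosSemidef) (hρtr : ρ.trace = 1)
    (hρcomm : ∀ W ∈ Matrix.unitaryGroup (Fin d) ℂ, ρ * tp m W = tp m W * ρ)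
    (T : Matrix (Fin (m + 1) → Fin d) (Fin (m + 1) → Fin d) ℂ)
    (hT : ∀ f g, T f g = ψ (f 0) * star (ψ (g 0)) *
      ρ (fun i => f i.succ) (fun i => g i.succ))
    (S : Matrix (Fin (m + 1) → Fin d) (Fin (m + 1) → Fin d) ℂ)
    (hS : S = (((m + 1).factorial : ℂ))⁻¹ •
      ∑ π : Equiv.Perm (Fin (m + 1)), permOp π * T * (permOp π)ᴴ)
    (x y : Fin d) :
    ∑ h : Fin m → Fin d, S (Fin.cons x h) (Fin.cons y h) =
      (1 / ((m : ℂ) + 1)) * ψ x * star (ψ y) +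
        ((m : ℂ) / ((m : ℂ) + 1)) * (1 / (d : ℂ)) * (if x = y then 1 else 0) :=
  perm_avg_reduced_state_general d m ψ hψ ρ hρtr hρcomm T hT S hS x y
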